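/- arXiv:2512.03638 — 6 statements merged into one kernel-verified Lean document; each statement's English description precedes it below -/
import Mathlib

section
/- Let (x, y, z, t) ∈ ℂ⁴ be a nonzero vector satisfying x² + y² + z² = t². Then |x|² + |y|² + |z|² ≥ |t|², and equality |x|² + |y|² + |z|² = |t|² holds if and only if there exist α ∈ ℂ and a real vector (a, b, c, d) ∈ ℝ⁴ such that (x, y, z, t) = (αa, αb, αc, αd). -/
/-!
Put `S = x² + y² + z² = t²`. The triangle inequality gives `‖t‖² = ‖S‖ ≤ ‖x‖² + ‖y‖² + ‖z‖²`.
In the equality case with `t ≠ 0`, the quotients `u ∈ {x/t, y/t, z/t}` satisfy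
`Re (∑ u²) = 1 = ∑ ‖u‖²`; since `‖u‖² - Re (u²) = 2 (Im u)²`, they are all real, and
`(x, y, z, t) = t • (x/t, y/t, z/t, 1)`. Conversely, if `x, y, z ∈ α ℝ` then their squares all lie
on the ray through `α²`, so the triangle inequality is an equality.
-/

open Complex Finset

lemma Complex.sq_norm_sub_re_sq (u : ℂ) : ‖u‖ ^ 2 - (u ^ 2).re = 2 * u.im ^ 2 := by
  rw [Complex.sq_norm, normSq_apply, sq, mul_re]; ring

section

variable {ι : Type*} (s : Finset ι) (v : ι → ℂ)

lemma norm_sum_sq_le_sum_sq_norm : ‖∑ i ∈ s, v i ^ 2‖ ≤ ∑ i ∈ s, ‖v i‖ ^ 2 :=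
  (norm_sum_le _ _).trans_eq (by simp only [Complex.norm_pow])

lemma im_eq_zero_of_re_sum_sq_eq_sum_sq_norm
    (h : (∑ i ∈ s, v i ^ 2).re = ∑ i ∈ s, ‖v i‖ ^ 2) : ∀ i ∈ s, (v i).im = 0 := by
  have hsum : ∑ i ∈ s, 2 * (v i).im ^ 2 = 0 := by
    simp only [← Complex.sq_norm_sub_re_sq, sum_sub_distrib, ← re_sum, h, sub_self]
  intro i hi
  simpa using (sum_eq_zero_iff_of_nonneg (fun j _ => by positivity)).mp hsum i hi

lemma exists_real_of_sum_sq_eq_sq_of_sq_norm_eq (β : ℂ) (hβ : ∑ i ∈ s, v i ^ 2 = β ^ 2)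
    (hnorm : ‖β‖ ^ 2 = ∑ i ∈ s, ‖v i‖ ^ 2) : ∃ r : ι → ℝ, ∀ i ∈ s, v i = β * r i := by
  rcases eq_or_ne β 0 with rfl | hβ0
  · refine ⟨0, fun i hi => ?_⟩
    rw [norm_zero, sq, zero_mul, eq_comm, sum_eq_zero_iff_of_nonneg fun j _ => by positivity] at hnorm
    simpa using hnorm i hi
  · refine ⟨fun i => (v i / β).re, fun i hi => ?_⟩
    have hre : (∑ i ∈ s, (v i / β) ^ 2).re = ∑ i ∈ s, ‖v i / β‖ ^ 2 := by
      simp only [div_pow, norm_div, ← sum_div, hβ, ← hnorm, div_self (pow_ne_zero 2 hβ0),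
        div_self (pow_ne_zero 2 (norm_ne_zero_iff.mpr hβ0)), one_re]
    have him := im_eq_zero_of_re_sum_sq_eq_sum_sq_norm s _ hre i hi
    rw [← mul_div_cancel₀ (v i) hβ0, ← re_add_im (v i / β), him]
    simp

lemma norm_sum_sq_of_eq_mul_real (α : ℂ) (r : ι → ℝ) (h : ∀ i ∈ s, v i = α * r i) :
    ‖∑ i ∈ s, v i ^ 2‖ = ∑ i ∈ s, ‖v i‖ ^ 2 := by
  have hsq : ∀ i ∈ s, v i ^ 2 = α ^ 2 * (r i ^ 2 : ℝ) := fun i hi => by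
    rw [h i hi]; push_cast; ring
  have hsq_norm : ∀ i ∈ s, ‖v i‖ ^ 2 = ‖α‖ ^ 2 * r i ^ 2 := fun i hi => by
    rw [h i hi, norm_mul, norm_real, Real.norm_eq_abs, mul_pow, sq_abs]
  rw [sum_congr rfl hsq, sum_congr rfl hsq_norm, ← mul_sum, ← mul_sum, ← ofReal_sum, norm_mul,
    Complex.norm_pow, norm_real, Real.norm_of_nonneg (sum_nonneg fun i _ => sq_nonneg (r i))]

end

theorem stmt_0_general (x y z t : ℂ)
    (h : x ^ 2 + y ^ 2 + z ^ 2 = t ^ 2) :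
    ‖t‖ ^ 2 ≤ ‖x‖ ^ 2 + ‖y‖ ^ 2 + ‖z‖ ^ 2 ∧
    (‖x‖ ^ 2 + ‖y‖ ^ 2 + ‖z‖ ^ 2 = ‖t‖ ^ 2 ↔
      ∃ (α : ℂ) (a b c d : ℝ), x = α * a ∧ y = α * b ∧ z = α * c ∧ t = α * d) := by
  set v : Fin 3 → ℂ := ![x, y, z]
  have hsum : ∑ i, v i ^ 2 = t ^ 2 := by simpa [v, Fin.sum_univ_three] using h
  have hnorm : ∑ i, ‖v i‖ ^ 2 = ‖x‖ ^ 2 + ‖y‖ ^ 2 + ‖z‖ ^ 2 := by simp [v, Fin.sum_univ_three]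
  have hnorm_t : ‖t‖ ^ 2 = ‖∑ i, v i ^ 2‖ := by rw [hsum, Complex.norm_pow]
  refine ⟨hnorm_t ▸ hnorm ▸ norm_sum_sq_le_sum_sq_norm _ v, fun heq => ?_, ?_⟩
  · obtain ⟨r, hr⟩ := exists_real_of_sum_sq_eq_sq_of_sq_norm_eq univ v t hsum (hnorm ▸ heq.symm)
    exact ⟨t, r 0, r 1, r 2, 1, hr 0 (mem_univ _), hr 1 (mem_univ _), hr 2 (mem_univ _), by simp⟩
  · rintro ⟨α, a, b, c, -, hx, hy, hz, -⟩
    rw [← hnorm, hnorm_t]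
    refine (norm_sum_sq_of_eq_mul_real univ v α ![a, b, c] fun i _ => ?_).symm
    fin_cases i <;> assumption

/-- **Lemma 3.17** (boundary of the 2-dimensional period domain of K3-type).
If `(x, y, z, t) ∈ ℂ⁴` is a nonzero vector with `x² + y² + z² = t²`, then
`|x|² + |y|² + |z|² ≥ |t|²`, with equality if and only if `(x, y, z, t)` is a common
complex multiple of a real vector `(a, b, c, d) ∈ ℝ⁴`. -/
theorem stmt_0 (x y z t : ℂ) (hne : ¬(x = 0 ∧ y = 0 ∧ z = 0 ∧ t = 0))
    (h : x ^ 2 + y ^ 2 + z ^ 2 = t ^ 2) :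
    ‖t‖ ^ 2 ≤ ‖x‖ ^ 2 + ‖y‖ ^ 2 + ‖z‖ ^ 2 ∧
    (‖x‖ ^ 2 + ‖y‖ ^ 2 + ‖z‖ ^ 2 = ‖t‖ ^ 2 ↔
      ∃ (α : ℂ) (a b c d : ℝ), x = α * a ∧ y = α * b ∧ z = α * c ∧ t = α * d) :=
  stmt_0_general x y z t h
end

section
/- For all complex numbers x₀, x₁, y₀, y₁ one has |x₀y₀ + x₁y₁|² + |x₁y₁ − x₀y₀|² + |x₁y₀ − x₀y₁|² − |x₁y₀ + x₀y₁|² = 2·|x₀·conj(y₀) − x₁·conj(y₁)|². Consequently, for nonzero (x₀,x₁), (y₀,y₁) ∈ ℂ², the point ι([x₀:x₁],[y₀:y₁]) lies in D₂ if and only if x₀·conj(y₀) ≠ x₁·conj(y₁); in particular, for each fixed [y₀:y₁] ∈ ℙ¹ the set of [x₀:x₁] with ι([x₀:x₁],[y₀:y₁]) ∉ D₂ is the single point [conj(y₁):conj(y₀)]. -/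
/-! Expanding the four squared norms in real and imaginary parts, the cross terms of `E`
recombine into `2‖x₀ ȳ₀ − x₁ ȳ₁‖²`, so `E ≥ 0` with equality exactly when `x₀ ȳ₀ = x₁ ȳ₁`.
For `(y₀, y₁) ≠ 0` this linear equation in `(x₀, x₁)` has a one-dimensional solution space,
spanned by `(ȳ₁, ȳ₀)`. -/

/-- The function `E` whose positivity characterizes membership of
`ι([x₀:x₁],[y₀:y₁]) = [x₀y₀+x₁y₁ : i(x₁y₁−x₀y₀) : x₁y₀−x₀y₁ : x₁y₀+x₀y₁]` in the
2-dimensional period domain `D₂ = {[x:y:z:t] : x²+y²+z²=t², |x|²+|y|²+|z|²−|t|² > 0}`. -/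
noncomputable def E (x₀ x₁ y₀ y₁ : ℂ) : ℝ :=
  ‖x₀ * y₀ + x₁ * y₁‖ ^ 2 + ‖x₁ * y₁ - x₀ * y₀‖ ^ 2 +
    ‖x₁ * y₀ - x₀ * y₁‖ ^ 2 - ‖x₁ * y₀ + x₀ * y₁‖ ^ 2

lemma E_eq_two_mul_norm_sq (x₀ x₁ y₀ y₁ : ℂ) :
    E x₀ x₁ y₀ y₁ = 2 * ‖x₀ * (starRingEnd ℂ) y₀ - x₁ * (starRingEnd ℂ) y₁‖ ^ 2 := by
  simp only [E, Complex.sq_norm, Complex.normSq_apply, Complex.add_re, Complex.add_im,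
    Complex.sub_re, Complex.sub_im, Complex.mul_re, Complex.mul_im, Complex.conj_re,
    Complex.conj_im]
  ring

lemma E_pos_iff (x₀ x₁ y₀ y₁ : ℂ) :
    0 < E x₀ x₁ y₀ y₁ ↔ x₀ * (starRingEnd ℂ) y₀ ≠ x₁ * (starRingEnd ℂ) y₁ := by
  rw [E_eq_two_mul_norm_sq, mul_pos_iff_of_pos_left two_pos, sq_pos_iff, norm_ne_zero_iff,
    sub_ne_zero]

section Proportional

variable {K : Type*} [Field K] {x₀ x₁ a b : K}

lemma exists_eq_mul_of_mul_eq_mul (ha : a ≠ 0) (hx : ¬(x₀ = 0 ∧ x₁ = 0))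
    (h : x₀ * b = x₁ * a) : ∃ c : K, c ≠ 0 ∧ x₀ = c * a ∧ x₁ = c * b := by
  have hx₀ : x₀ ≠ 0 := by
    rintro rfl
    exact hx ⟨rfl, (mul_eq_zero.mp (h.symm.trans (zero_mul b))).resolve_right ha⟩
  refine ⟨x₀ / a, div_ne_zero hx₀ ha, (div_mul_cancel₀ x₀ ha).symm, ?_⟩
  rw [div_mul_eq_mul_div, eq_div_iff ha, h]

lemma mul_eq_mul_iff_exists_eq_mul (hx : ¬(x₀ = 0 ∧ x₁ = 0)) (hab : ¬(a = 0 ∧ b = 0)) :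
    x₀ * b = x₁ * a ↔ ∃ c : K, c ≠ 0 ∧ x₀ = c * a ∧ x₁ = c * b := by
  refine ⟨fun h => ?_, fun ⟨c, _, h₀, h₁⟩ => by rw [h₀, h₁]; ring⟩
  by_cases ha : a = 0
  · have hb : b ≠ 0 := fun hb => hab ⟨ha, hb⟩
    obtain ⟨c, hc, h₁, h₀⟩ :=
      exists_eq_mul_of_mul_eq_mul hb (fun h' => hx h'.symm) h.symm
    exact ⟨c, hc, h₀, h₁⟩
  · exact exists_eq_mul_of_mul_eq_mul ha hx h

end Proportional

/-- **(Behind Corollary 3.21.)** One has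
`E(x₀,x₁,y₀,y₁) = 2·|x₀·conj(y₀) − x₁·conj(y₁)|²`; consequently, for nonzero
`(x₀,x₁), (y₀,y₁) ∈ ℂ²`, the point `ι([x₀:x₁],[y₀:y₁])` lies in `D₂` iff
`x₀·conj(y₀) ≠ x₁·conj(y₁)`, and for fixed `[y₀:y₁]` the unique point `[x₀:x₁] ∈ ℙ¹` with
`ι([x₀:x₁],[y₀:y₁]) ∉ D₂` is `[conj(y₁):conj(y₀)]`. -/
theorem stmt_1 :
    (∀ x₀ x₁ y₀ y₁ : ℂ,
        E x₀ x₁ y₀ y₁ =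
          2 * ‖x₀ * (starRingEnd ℂ) y₀ - x₁ * (starRingEnd ℂ) y₁‖ ^ 2) ∧
    (∀ x₀ x₁ y₀ y₁ : ℂ, ¬(x₀ = 0 ∧ x₁ = 0) → ¬(y₀ = 0 ∧ y₁ = 0) →
        ((0 < E x₀ x₁ y₀ y₁ ↔ x₀ * (starRingEnd ℂ) y₀ ≠ x₁ * (starRingEnd ℂ) y₁) ∧
          (x₀ * (starRingEnd ℂ) y₀ = x₁ * (starRingEnd ℂ) y₁ ↔
            ∃ c : ℂ, c ≠ 0 ∧ x₀ = c * (starRingEnd ℂ) y₁ ∧ x₁ = c * (starRingEnd ℂ) y₀))) := by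
  refine ⟨E_eq_two_mul_norm_sq, fun x₀ x₁ y₀ y₁ hx hy => ⟨E_pos_iff x₀ x₁ y₀ y₁, ?_⟩⟩
  exact mul_eq_mul_iff_exists_eq_mul hx fun h => hy ⟨by simpa using h.2, by simpa using h.1⟩
end

section
/- Let q : ℂ⁴ × ℂ⁴ → ℂ be the complex-bilinear form q(a,b) = a₁b₁ + a₂b₂ + a₃b₃ − a₄b₄. For x, y ∈ ℂ set u := (xy+1, i(1−xy), y−x, x+y), v_x := (y, −iy, −1, 1), v_y := (x, −ix, 1, 1), and write ū, v̄_x, v̄_y for componentwise complex conjugates. Then: (i) q(u, ū) = 2·|x·conj(y) − 1|²; (ii) q(v_x, v̄_x)·q(u, ū) = q(v_x, ū)·q(u, v̄_x); (iii) q(v_y, v̄_y)·q(u, ū) = q(v_y, ū)·q(u, v̄_y); (iv) (q(v_x, ū)·q(u, v̄_y) − q(v_x, v̄_y)·q(u, ū))·(x·conj(y) − 1)² = q(u, ū)². -/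
/-- The complex-bilinear form `q(a,b) = a₁b₁ + a₂b₂ + a₃b₃ − a₄b₄` on `ℂ⁴`. -/
def q4 (a b : ℂ × ℂ × ℂ × ℂ) : ℂ :=
  a.1 * b.1 + a.2.1 * b.2.1 + a.2.2.1 * b.2.2.1 - a.2.2.2 * b.2.2.2

/-- Componentwise complex conjugation on `ℂ⁴`. -/
def conj4 (a : ℂ × ℂ × ℂ × ℂ) : ℂ × ℂ × ℂ × ℂ :=
  ((starRingEnd ℂ) a.1, (starRingEnd ℂ) a.2.1, (starRingEnd ℂ) a.2.2.1, (starRingEnd ℂ) a.2.2.2)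

/-!
Each pairing `q(a, b̄)` of `u, vₓ, v_y` has a closed form built from `x·ȳ − 1`, `x̄·y − 1` and at
most one coordinate; `i² = −1` is needed only to obtain it. Once these forms are substituted,
(ii)–(iv) are polynomial identities in `x, y, x̄, ȳ`, and (i) is `z·z̄ = |z|²` for `z = x·ȳ − 1`.
-/

open ComplexConjugate

namespace PeriodChart

def chartVec (x y : ℂ) : ℂ × ℂ × ℂ × ℂ :=
  (x * y + 1, Complex.I * (1 - x * y), y - x, x + y)

-- `vₓ` and `v_y` are the partial derivatives of `chartVec` in `x` and `y`.
def chartVecDx (y : ℂ) : ℂ × ℂ × ℂ × ℂ :=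
  (y, -Complex.I * y, -1, 1)

def chartVecDy (x : ℂ) : ℂ × ℂ × ℂ × ℂ :=
  (x, -Complex.I * x, 1, 1)

variable (x y : ℂ)

lemma q4_chartVec_conj :
    q4 (chartVec x y) (conj4 (chartVec x y)) = 2 * (x * conj y - 1) * (conj x * y - 1) := by
  simp only [q4, conj4, chartVec, map_add, map_sub, map_mul, map_one, Complex.conj_I]
  linear_combination (-(1 - x * y) * (1 - conj x * conj y)) * Complex.I_sq

lemma q4_chartVecDx_conj :
    q4 (chartVecDx y) (conj4 (chartVecDx y)) = 2 * y * conj y := by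
  simp only [q4, conj4, chartVecDx, map_neg, map_mul, map_one, Complex.conj_I]
  linear_combination (-y * conj y) * Complex.I_sq

lemma q4_chartVecDy_conj :
    q4 (chartVecDy x) (conj4 (chartVecDy x)) = 2 * x * conj x := by
  simp only [q4, conj4, chartVecDy, map_neg, map_mul, map_one, Complex.conj_I]
  linear_combination (-x * conj x) * Complex.I_sq

lemma q4_chartVecDx_conj_chartVec :
    q4 (chartVecDx y) (conj4 (chartVec x y)) = 2 * conj y * (conj x * y - 1) := by
  simp only [q4, conj4, chartVec, chartVecDx, map_add, map_sub, map_mul, map_one, Complex.conj_I]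
  linear_combination (y * (1 - conj x * conj y)) * Complex.I_sq

lemma q4_chartVecDy_conj_chartVec :
    q4 (chartVecDy x) (conj4 (chartVec x y)) = 2 * conj x * (x * conj y - 1) := by
  simp only [q4, conj4, chartVec, chartVecDy, map_add, map_sub, map_mul, map_one, Complex.conj_I]
  linear_combination (x * (1 - conj x * conj y)) * Complex.I_sq

lemma q4_chartVec_conj_chartVecDx :
    q4 (chartVec x y) (conj4 (chartVecDx y)) = 2 * y * (x * conj y - 1) := by
  simp only [q4, conj4, chartVec, chartVecDx, map_neg, map_mul, map_one, Complex.conj_I]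
  linear_combination ((1 - x * y) * conj y) * Complex.I_sq

lemma q4_chartVec_conj_chartVecDy :
    q4 (chartVec x y) (conj4 (chartVecDy x)) = 2 * x * (conj x * y - 1) := by
  simp only [q4, conj4, chartVec, chartVecDy, map_neg, map_mul, map_one, Complex.conj_I]
  linear_combination ((1 - x * y) * conj x) * Complex.I_sq

lemma q4_chartVecDx_conj_chartVecDy :
    q4 (chartVecDx y) (conj4 (chartVecDy x)) = 2 * (conj x * y - 1) := by
  simp only [q4, conj4, chartVecDx, chartVecDy, map_neg, map_mul, map_one, Complex.conj_I]
  linear_combination (-y * conj x) * Complex.I_sq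

end PeriodChart

open PeriodChart in
/-- **Proposition 3.19** (the Griffiths–Schmid metric on the 2-dimensional period domain
has matrix `[[0, (x·conj(y)−1)⁻²], [(y·conj(x)−1)⁻², 0]]`). With
`u = (xy+1, i(1−xy), y−x, x+y)`, `vₓ = (y, −iy, −1, 1)`, `v_y = (x, −ix, 1, 1)`:
(i) `q(u,ū) = 2|x·conj(y)−1|²`; (ii) `q(vₓ,v̄ₓ)q(u,ū) = q(vₓ,ū)q(u,v̄ₓ)`;
(iii) `q(v_y,v̄_y)q(u,ū) = q(v_y,ū)q(u,v̄_y)`;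
(iv) `(q(vₓ,ū)q(u,v̄_y) − q(vₓ,v̄_y)q(u,ū))·(x·conj(y)−1)² = q(u,ū)²`. -/
theorem stmt_3 (x y : ℂ) :
    let u : ℂ × ℂ × ℂ × ℂ := (x * y + 1, Complex.I * (1 - x * y), y - x, x + y)
    let vx : ℂ × ℂ × ℂ × ℂ := (y, -Complex.I * y, -1, 1)
    let vy : ℂ × ℂ × ℂ × ℂ := (x, -Complex.I * x, 1, 1)
    q4 u (conj4 u) = ((2 * ‖x * (starRingEnd ℂ) y - 1‖ ^ 2 : ℝ) : ℂ) ∧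
    q4 vx (conj4 vx) * q4 u (conj4 u) = q4 vx (conj4 u) * q4 u (conj4 vx) ∧
    q4 vy (conj4 vy) * q4 u (conj4 u) = q4 vy (conj4 u) * q4 u (conj4 vy) ∧
    (q4 vx (conj4 u) * q4 u (conj4 vy) - q4 vx (conj4 vy) * q4 u (conj4 u)) *
        (x * (starRingEnd ℂ) y - 1) ^ 2 = q4 u (conj4 u) ^ 2 := by
  intro u vx vy
  rw [show u = chartVec x y from rfl, show vx = chartVecDx y from rfl,
    show vy = chartVecDy x from rfl, q4_chartVec_conj, q4_chartVecDx_conj, q4_chartVecDy_conj,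
    q4_chartVecDx_conj_chartVec, q4_chartVecDy_conj_chartVec, q4_chartVec_conj_chartVecDx,
    q4_chartVec_conj_chartVecDy, q4_chartVecDx_conj_chartVecDy]
  refine ⟨?_, by ring, by ring, by ring⟩
  have hconj : conj x * y - 1 = conj (x * conj y - 1) := by simp
  rw [hconj, mul_assoc, Complex.mul_conj']
  push_cast
  ring
end

section
/- Let S be a connected, Hausdorff, second-countable smooth 2-dimensional real manifold, let (U_i)_{i∈I} be an open cover of S, and let B ⊆ S be an at most countable subset. Then there exist a function ψ : B → I and a locally finite cover (F_j)_{j∈J} of S by closed subsets such that: (1) for every x ∈ B, x ∈ U_{ψ(x)}; (2) for every j ∈ J there exists i ∈ I with F_j ⊆ U_i; (3) for every j ∈ J, the set F_j ∩ B is open in the subspace topology of B, and ψ is constant on F_j ∩ B. -/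
open scoped Manifold

/-!
Fix a metric on `S`. As `B` is countable, only countably many spheres about a given point meet
`B`, so every point has arbitrarily small closed balls inside some `U i` whose boundary sphere
avoids `B`; on `B` such a ball `C` agrees with the open ball `O`. Paracompactness gives a locally
finite cover by such balls `C a`. Well-order the index set and put `F j = C j \ ⋃_{k < j} O k`.
These sets are closed and still cover `S`, and a point `x ∈ B` lies in `F j` exactly when `j` is
the first index with `x ∈ O j`, so `ψ x` may be chosen through this first index. On `B`, `F j` is
`O j` minus `⋃_{k < j} C k`, which is closed by local finiteness; hence `F j ∩ B` is open in `B`.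
-/

open Set Metric Topology

section Peel

variable {X α : Type*}

def peel (r : α → α → Prop) (C O : α → Set X) (j : α) : Set X :=
  C j \ ⋃ (k) (_ : r k j), O k

variable {r : α → α → Prop} {C O : α → Set X}

theorem peel_subset (j : α) : peel r C O j ⊆ C j :=
  sdiff_subset

theorem isClosed_peel [TopologicalSpace X] (hC : ∀ a, IsClosed (C a)) (hO : ∀ a, IsOpen (O a))
    (j : α) : IsClosed (peel r C O j) :=
  (hC j).sdiff (isOpen_biUnion fun k _ => hO k)

theorem iUnion_peel [IsWellFounded α r] (hOC : ∀ a, O a ⊆ C a) :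
    ⋃ j, peel r C O j = ⋃ j, C j := by
  refine Subset.antisymm (iUnion_mono peel_subset) fun x hx => ?_
  obtain ⟨j, hxj, hmin⟩ := (IsWellFounded.wf : WellFounded r).has_min {a | x ∈ C a}
    (mem_iUnion.1 hx)
  refine mem_iUnion.2 ⟨j, hxj, ?_⟩
  simp only [mem_iUnion, not_exists]
  exact fun k hkj hxk => hmin k (hOC k hxk) hkj

variable {B : Set X}

theorem mem_peel_iff_of_mem (hOC : ∀ a, O a ⊆ C a) (hCB : ∀ a, C a ∩ B ⊆ O a) {x : X}
    (hx : x ∈ B) {j : α} : x ∈ peel r C O j ↔ x ∈ O j ∧ ∀ k, r k j → x ∉ C k := by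
  have hCO : ∀ a, x ∈ C a ↔ x ∈ O a := fun a =>
    ⟨fun hxC => hCB a ⟨hxC, hx⟩, fun hxO => hOC a hxO⟩
  simp only [peel, mem_sdiff, mem_iUnion, not_exists, hCO]

theorem isOpen_val_preimage_peel [TopologicalSpace X] (hC : ∀ a, IsClosed (C a))
    (hO : ∀ a, IsOpen (O a)) (hOC : ∀ a, O a ⊆ C a) (hfin : LocallyFinite C)
    (hCB : ∀ a, C a ∩ B ⊆ O a) (j : α) :
    IsOpen (((↑) : B → X) ⁻¹' peel r C O j) := by
  have hclosed : IsClosed (⋃ (k : {k // r k j}), C k) :=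
    (hfin.comp_injective Subtype.val_injective).isClosed_iUnion fun k => hC k
  have hpreimage :
      ((↑) : B → X) ⁻¹' peel r C O j = (↑) ⁻¹' (O j \ ⋃ (k : {k // r k j}), C k) := by
    ext x
    simp only [mem_preimage, mem_peel_iff_of_mem hOC hCB x.2, mem_sdiff, mem_iUnion,
      Subtype.exists, not_exists]
  rw [hpreimage]
  exact ((hO j).sdiff hclosed).preimage continuous_subtype_val

theorem exists_eq_of_mem_peel [IsWellOrder α r] (hOC : ∀ a, O a ⊆ C a)
    (hcov : ⋃ a, C a = univ) (hCB : ∀ a, C a ∩ B ⊆ O a) :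
    ∃ φ : B → α, (∀ x, (x : X) ∈ O (φ x)) ∧
      ∀ j (x : B), (x : X) ∈ peel r C O j → φ x = j := by
  have hne : ∀ x : B, {a | (x : X) ∈ O a}.Nonempty := fun x => by
    obtain ⟨a, hxa⟩ := mem_iUnion.1 (hcov ▸ mem_univ (x : X))
    exact ⟨a, hCB a ⟨hxa, x.2⟩⟩
  have wf : WellFounded r := IsWellFounded.wf
  refine ⟨fun x => wf.min _ (hne x), fun x => wf.min_mem _ (hne x), fun j x hxj => ?_⟩
  obtain ⟨hxO, hfirst⟩ := (mem_peel_iff_of_mem hOC hCB x.2).1 hxj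
  exact wf.min_eq_of_forall_not_lt hxO fun k hxk hkj => hfirst k hkj (hOC k hxk)

end Peel

section SphereAvoiding

variable {X : Type*} [PseudoMetricSpace X] {B : Set X}

theorem exists_pos_lt_disjoint_sphere (hB : B.Countable) (x : X) {ε : ℝ} (hε : 0 < ε) :
    ∃ ρ, 0 < ρ ∧ ρ < ε ∧ Disjoint (sphere x ρ) B := by
  obtain ⟨ρ, hρB, hρ, hρε⟩ := ((hB.image (dist · x)).dense_compl ℝ).exists_between hε
  refine ⟨ρ, hρ, hρε, disjoint_left.2 fun y hy hyB => hρB ⟨y, hyB, ?_⟩⟩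
  exact mem_sphere.1 hy

theorem nhds_basis_closedBall_disjoint_sphere (hB : B.Countable) (x : X) :
    (𝓝 x).HasBasis (fun ρ => 0 < ρ ∧ Disjoint (sphere x ρ) B) (closedBall x) :=
  nhds_basis_closedBall.restrict fun _ hε =>
    let ⟨ρ, hρ, hρε, hdisj⟩ := exists_pos_lt_disjoint_sphere hB x hε
    ⟨ρ, hρ, hdisj, closedBall_subset_closedBall hρε.le⟩

theorem closedBall_inter_subset_ball {x : X} {ρ : ℝ} (h : Disjoint (sphere x ρ) B) :
    closedBall x ρ ∩ B ⊆ ball x ρ := by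
  rintro y ⟨hy, hyB⟩
  rw [← ball_union_sphere] at hy
  exact hy.resolve_right fun hys => h.notMem_of_mem_right hyB hys

end SphereAvoiding

theorem stmt_7_general {S : Type} [TopologicalSpace S] [T2Space S]
    [SecondCountableTopology S] [ChartedSpace (EuclideanSpace ℝ (Fin 2)) S]
    {I : Type} (U : I → Set S) (hUopen : ∀ i, IsOpen (U i))
    (hUcov : (⋃ i, U i) = Set.univ)
    (B : Set S) (hB : B.Countable) :
    ∃ (ψ : B → I) (J : Type) (F : J → Set S),
      (∀ x : B, (x : S) ∈ U (ψ x)) ∧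
      (∀ j, IsClosed (F j)) ∧
      LocallyFinite F ∧
      (⋃ j, F j) = Set.univ ∧
      (∀ j, ∃ i, F j ⊆ U i) ∧
      (∀ j, IsOpen ((fun x : B => (x : S)) ⁻¹' F j)) ∧
      (∀ j, ∀ x y : B, (x : S) ∈ F j → (y : S) ∈ F j → ψ x = ψ y) := by
  have := ChartedSpace.locallyCompactSpace (EuclideanSpace ℝ (Fin 2)) S
  let _ : MetricSpace S := TopologicalSpace.metrizableSpaceMetric S
  choose ix hix using fun x => mem_iUnion.1 (hUcov.symm ▸ mem_univ x : x ∈ ⋃ i, U i)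
  obtain ⟨α, c, ρ, hρ, hcov, hfin⟩ := refinement_of_locallyCompact_sigmaCompact_of_nhds_basis
    fun x => (nhds_basis_closedBall_disjoint_sphere hB x).restrict_subset
      ((hUopen (ix x)).mem_nhds (hix x))
  set C : α → Set S := fun a => closedBall (c a) (ρ a)
  set O : α → Set S := fun a => ball (c a) (ρ a)
  have hC : ∀ a, IsClosed (C a) := fun _ => isClosed_closedBall
  have hO : ∀ a, IsOpen (O a) := fun _ => isOpen_ball
  have hOC : ∀ a, O a ⊆ C a := fun _ => ball_subset_closedBall
  have hCB : ∀ a, C a ∩ B ⊆ O a := fun a => closedBall_inter_subset_ball (hρ a).1.2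
  obtain ⟨φ, hφ, hφ_eq⟩ := exists_eq_of_mem_peel (r := WellOrderingRel) hOC hcov hCB
  refine ⟨fun x => ix (c (φ x)), α, peel WellOrderingRel C O,
    fun x => (hρ _).2 (hOC _ (hφ x)), isClosed_peel hC hO, hfin.subset peel_subset,
    (iUnion_peel hOC).trans hcov, fun j => ⟨ix (c j), (peel_subset j).trans (hρ j).2⟩,
    isOpen_val_preimage_peel hC hO hOC hfin hCB,
    fun j x y hx hy => congrArg (ix ∘ c) ((hφ_eq j x hx).trans (hφ_eq j y hy).symm)⟩

/-- **Lemma 4.13** (adaptation of a lemma of Greb–Schwald to non-compact surfaces).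
Let `S` be a connected, Hausdorff, second-countable smooth surface, `(U i)_{i ∈ I}` an
open cover of `S` and `B ⊆ S` an at most countable subset. Then there exist `ψ : B → I`
and a locally finite closed cover `(F j)_{j ∈ J}` of `S` such that:
(1) every `x ∈ B` lies in `U (ψ x)`;
(2) every `F j` is contained in some `U i`;
(3) every `F j ∩ B` is open in the subspace topology of `B` and `ψ` is constant on it. -/
theorem stmt_7 {S : Type} [TopologicalSpace S] [T2Space S] [ConnectedSpace S]
    [SecondCountableTopology S] [ChartedSpace (EuclideanSpace ℝ (Fin 2)) S]
    [IsManifold (𝓡 2) (⊤ : ℕ∞) S]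
    {I : Type} (U : I → Set S) (hUopen : ∀ i, IsOpen (U i))
    (hUcov : (⋃ i, U i) = Set.univ)
    (B : Set S) (hB : B.Countable) :
    ∃ (ψ : B → I) (J : Type) (F : J → Set S),
      (∀ x : B, (x : S) ∈ U (ψ x)) ∧
      (∀ j, IsClosed (F j)) ∧
      LocallyFinite F ∧
      (⋃ j, F j) = Set.univ ∧
      (∀ j, ∃ i, F j ⊆ U i) ∧
      (∀ j, IsOpen ((fun x : B => (x : S)) ⁻¹' F j)) ∧
      (∀ j, ∀ x y : B, (x : S) ∈ F j → (y : S) ∈ F j → ψ x = ψ y) :=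
  stmt_7_general U hUopen hUcov B hB
end

section
/- (a) For every λ ∈ ℂ and every real s with λ·s ≠ 1, one has Re(λ/(λs−1)²) = (Re(λ)·|λ|²·s² − 2·|λ|²·s + Re(λ)) / |λs−1|⁴. (b) Let α ∈ ℂ with Re(α) > 0 and Im(α) ≠ 0, and set C_α := (|α| − |Im(α)|)/(|α|·Re(α)). Then C_α > 0, and for every positive integer n and every real s with 0 ≤ s < C_α·n, one has (α/n)·s ≠ 1 and Re((α/n)/((α/n)·s − 1)²) > 0. -/
/-!
Write `a = Re λ`, `b = Im λ`, `r = |λ|`. Expanding `Re(λ/(λs−1)²)` over the real denominator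
`|λs−1|⁴` gives the numerator `Q(s) = a r² s² − 2 r² s + a`, and since `r² = a² + b²`,
`a · Q(s) = (r (1 − a s))² − b²` is a difference of squares. It is positive as soon as
`r (1 − a s) > |b|`, i.e. `s < C_λ = (r − |b|)/(r a)`, and `C_{α/n} = n C_α`.
-/

namespace Complex

theorem re_div_mul_ofReal_sub_one_sq {z : ℂ} {s : ℝ} (h : z * s ≠ 1) :
    (z / (z * s - 1) ^ 2).re =
      (z.re * ‖z‖ ^ 2 * s ^ 2 - 2 * ‖z‖ ^ 2 * s + z.re) / ‖z * s - 1‖ ^ 4 := by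
  have hpos : 0 < normSq (z * s - 1) := normSq_pos.2 (sub_ne_zero.2 h)
  have hnorm4 : ‖z * s - 1‖ ^ 4 = normSq (z * s - 1) ^ 2 := by
    rw [show 4 = 2 * 2 from rfl, pow_mul, Complex.sq_norm]
  rw [div_re, hnorm4, Complex.sq_norm, map_pow, ← add_div,
    div_eq_div_iff (by positivity) (by positivity)]
  simp only [normSq_apply, mul_re, mul_im, sub_re, sub_im, ofReal_re, ofReal_im, one_re,
    one_im, pow_two]
  ring

noncomputable def positivityRadius (z : ℂ) : ℝ := (‖z‖ - |z.im|) / (‖z‖ * z.re)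

theorem positivityRadius_pos {z : ℂ} (hre : 0 < z.re) : 0 < positivityRadius z :=
  have hlt : |z.im| < ‖z‖ := abs_im_lt_norm.2 hre.ne'
  div_pos (sub_pos.2 hlt) (mul_pos ((abs_nonneg _).trans_lt hlt) hre)

theorem positivityRadius_div_ofReal (z : ℂ) {c : ℝ} (hc : 0 < c) :
    positivityRadius (z / c) = c * positivityRadius z := by
  rw [positivityRadius, positivityRadius, norm_div, norm_real, Real.norm_of_nonneg hc.le,
    div_ofReal_im, div_ofReal_re, abs_div, abs_of_pos hc]
  field_simp

theorem re_div_mul_ofReal_sub_one_sq_pos {z : ℂ} {s : ℝ} (hre : 0 < z.re)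
    (hs : s < positivityRadius z) : z * s ≠ 1 ∧ 0 < (z / (z * s - 1) ^ 2).re := by
  have hnorm : 0 < ‖z‖ := (abs_nonneg _).trans_lt (abs_im_lt_norm.2 hre.ne')
  have hgap : |z.im| < ‖z‖ * (1 - z.re * s) := by
    rw [positivityRadius, lt_div_iff₀ (by positivity)] at hs
    linarith
  have hres : z.re * s < 1 := by
    by_contra! h
    nlinarith [abs_nonneg z.im]
  have hne : z * s ≠ 1 := fun h => by
    have := congrArg re h
    simp only [mul_re, ofReal_re, ofReal_im, mul_zero, sub_zero, one_re] at this
    exact hres.ne this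
  refine ⟨hne, ?_⟩
  rw [re_div_mul_ofReal_sub_one_sq hne]
  refine div_pos ?_ (pow_pos (norm_pos_iff.2 (sub_ne_zero.2 hne)) 4)
  have hsq : ‖z‖ ^ 2 = z.re ^ 2 + z.im ^ 2 := by rw [Complex.sq_norm, normSq_apply]; ring
  have hdiff : z.re * (z.re * ‖z‖ ^ 2 * s ^ 2 - 2 * ‖z‖ ^ 2 * s + z.re) =
      (‖z‖ * (1 - z.re * s)) ^ 2 - z.im ^ 2 := by
    linear_combination -hsq
  have himsq : z.im ^ 2 < (‖z‖ * (1 - z.re * s)) ^ 2 := by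
    rw [← sq_abs]
    exact pow_lt_pow_left₀ hgap (abs_nonneg _) two_ne_zero
  exact pos_of_mul_pos_right (hdiff ▸ sub_pos.2 himsq) hre.le

end Complex

/-- **Lemma 5.6**: (a) for `λ ∈ ℂ` and real `s` with `λs ≠ 1`,
`Re(λ/(λs−1)²) = (Re(λ)|λ|²s² − 2|λ|²s + Re(λ))/|λs−1|⁴`;
(b) for `α ∈ ℂ` with `Re(α) > 0` and `Im(α) ≠ 0`, the constant
`C_α := (|α| − |Im(α)|)/(|α|·Re(α))` is positive and for every positive integer `n`
and every real `s` with `0 ≤ s < C_α·n` one has `(α/n)·s ≠ 1` and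
`Re((α/n)/((α/n)s − 1)²) > 0`. -/
theorem stmt_9 :
    (∀ (lam : ℂ) (s : ℝ), lam * (s : ℂ) ≠ 1 →
        (lam / (lam * (s : ℂ) - 1) ^ 2).re =
          (lam.re * ‖lam‖ ^ 2 * s ^ 2 - 2 * ‖lam‖ ^ 2 * s + lam.re) /
            ‖lam * (s : ℂ) - 1‖ ^ 4) ∧
    (∀ α : ℂ, 0 < α.re → α.im ≠ 0 →
        0 < (‖α‖ - |α.im|) / (‖α‖ * α.re) ∧
        ∀ n : ℕ, 0 < n → ∀ s : ℝ, 0 ≤ s →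
          s < (‖α‖ - |α.im|) / (‖α‖ * α.re) * n →
          (α / (n : ℂ)) * (s : ℂ) ≠ 1 ∧
          0 < ((α / (n : ℂ)) / ((α / (n : ℂ)) * (s : ℂ) - 1) ^ 2).re) := by
  refine ⟨fun _ _ => Complex.re_div_mul_ofReal_sub_one_sq,
    fun α hre _ => ⟨Complex.positivityRadius_pos hre, fun n hn s _ hs => ?_⟩⟩
  have hscale := Complex.positivityRadius_div_ofReal α (Nat.cast_pos.2 hn : (0 : ℝ) < n)
  rw [Complex.ofReal_natCast] at hscale
  refine Complex.re_div_mul_ofReal_sub_one_sq_pos ?_ ?_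
  · rw [Complex.div_natCast_re]
    exact div_pos hre (Nat.cast_pos.2 hn)
  · rwa [hscale, mul_comm]
end

section
/- Let n ∈ ℕ and let P, Q : Fin(n+1) → ℂ[X] be tuples of polynomials such that Q_{j₀} ≠ 0 for some index j₀, and suppose that for all z ∈ ℂ and all indices i, j one has P_i(exp z)·Q_j(z) = P_j(exp z)·Q_i(z). Then there exist a polynomial R ∈ ℂ[X] and constants c₀, …, c_n ∈ ℂ such that P_i = c_i·R for every i; in particular, if the P_i have no common zero, the holomorphic map ℂ → ℙⁿ(ℂ), z ↦ [P₀(z) : … : P_n(z)], is constant. -/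
/-!
For fixed `w ≠ 0` the relation `P_i(e^z) Q_j(z) = P_j(e^z) Q_i(z)` holds at the infinitely
many `z` with `e^z = w`, hence as an identity `P_i(w) Q_j = P_j(w) Q_i` of polynomials.
Comparing the leading coefficient of `Q_{j₀}` with the same coefficient of `Q_i` gives
`P_i(w) = c_i P_{j₀}(w)` for all `w ≠ 0`, hence `P_i = c_i P_{j₀}`.
-/

open Polynomial

theorem Complex.infinite_exp_preimage_singleton {w : ℂ} (hw : w ≠ 0) :
    (Complex.exp ⁻¹' {w}).Infinite := by
  have h2πI : 2 * (Real.pi : ℂ) * Complex.I ≠ 0 := by simp [Real.pi_ne_zero]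
  refine Set.infinite_of_injective_forall_mem
    (f := fun k : ℕ => Complex.log w + k * (2 * Real.pi * Complex.I)) ?_ fun k => ?_
  · intro a b hab
    exact_mod_cast mul_right_cancel₀ h2πI (add_left_cancel hab)
  · simp only [Set.mem_preimage, Set.mem_singleton_iff]
    rw [(Complex.exp_periodic.nat_mul k) (Complex.log w), Complex.exp_log hw]

theorem Polynomial.eq_of_forall_ne_eval_eq {R : Type*} [CommRing R] [IsDomain R] [Infinite R]
    {p q : R[X]} (a : R) (h : ∀ x ≠ a, p.eval x = q.eval x) : p = q :=
  eq_of_infinite_eval_eq p q <| (Set.finite_singleton a).infinite_compl.mono fun x hx => h x hx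

theorem C_mul_eq_C_mul_of_comp_exp_mul_eq {f₁ f₂ : ℂ → ℂ} {q₁ q₂ : ℂ[X]}
    (h : ∀ z, f₁ (Complex.exp z) * q₂.eval z = f₂ (Complex.exp z) * q₁.eval z)
    {w : ℂ} (hw : w ≠ 0) : C (f₁ w) * q₂ = C (f₂ w) * q₁ := by
  refine eq_of_infinite_eval_eq _ _ <| (Complex.infinite_exp_preimage_singleton hw).mono ?_
  rintro z rfl
  simpa using h z

theorem eq_C_mul_of_eval_exp_mul_eq {ι : Type*} {P Q : ι → ℂ[X]} {j₀ : ι} (hQ : Q j₀ ≠ 0)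
    (h : ∀ (z : ℂ) (i : ι),
      (P i).eval (Complex.exp z) * (Q j₀).eval z = (P j₀).eval (Complex.exp z) * (Q i).eval z) :
    ∀ i, P i = C ((Q i).coeff (Q j₀).natDegree / (Q j₀).leadingCoeff) * P j₀ := by
  intro i
  refine eq_of_forall_ne_eval_eq 0 fun w hw => ?_
  have hcoeff := congrArg (coeff · (Q j₀).natDegree)
    (C_mul_eq_C_mul_of_comp_exp_mul_eq (f₁ := (P i).eval) (f₂ := (P j₀).eval) (h · i) hw)
  simp only [coeff_C_mul, coeff_natDegree] at hcoeff
  rw [eval_mul, eval_C]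
  field_simp [leadingCoeff_ne_zero.mpr hQ]
  linear_combination hcoeff

theorem exists_eval_eq_mul_eval_of_eq_C_mul {K ι : Type*} [Field K] {P : ι → K[X]} {R : K[X]}
    {c : ι → K} (hP : ∀ i, P i = C (c i) * R) (hne : ∀ z, ∃ i, (P i).eval z ≠ 0) (z w : K) :
    ∃ t ≠ 0, ∀ i, (P i).eval w = t * (P i).eval z := by
  have hR : ∀ x, R.eval x ≠ 0 := fun x => by
    obtain ⟨i, hi⟩ := hne x
    rw [hP i, eval_mul] at hi
    exact right_ne_zero_of_mul hi
  refine ⟨R.eval w / R.eval z, div_ne_zero (hR w) (hR z), fun i => ?_⟩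
  rw [hP i, eval_mul, eval_mul, eval_C, eval_C]
  field_simp [hR z]

/-- **Algebraic claim underlying Corollary 6.8**: if `P, Q : Fin (n+1) → ℂ[X]` are tuples
of polynomials with some `Q j₀ ≠ 0` and `P_i(e^z)·Q_j(z) = P_j(e^z)·Q_i(z)` for all
`z ∈ ℂ` and all indices `i, j`, then all `P_i` are constant multiples `c_i·R` of a single
polynomial `R`; in particular, if the `P_i` have no common zero, the holomorphic map
`ℂ → ℙⁿ(ℂ)`, `z ↦ [P₀(z) : … : P_n(z)]`, is constant. -/
theorem stmt_13 (n : ℕ) (P Q : Fin (n + 1) → Polynomial ℂ)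
    (hQ : ∃ j₀, Q j₀ ≠ 0)
    (h : ∀ (z : ℂ) (i j : Fin (n + 1)),
      (P i).eval (Complex.exp z) * (Q j).eval z = (P j).eval (Complex.exp z) * (Q i).eval z) :
    (∃ (R : Polynomial ℂ) (c : Fin (n + 1) → ℂ), ∀ i, P i = Polynomial.C (c i) * R) ∧
    ((∀ z : ℂ, ∃ i, (P i).eval z ≠ 0) →
      ∀ z w : ℂ, ∃ t : ℂ, t ≠ 0 ∧ ∀ i, (P i).eval w = t * (P i).eval z) := by
  obtain ⟨j₀, hj₀⟩ := hQ
  have hP := eq_C_mul_of_eval_exp_mul_eq hj₀ (h · · j₀)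
  exact ⟨⟨P j₀, _, hP⟩, exists_eval_eq_mul_eval_of_eq_C_mul hP⟩
end
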